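/- Let M₁, M₂ be symmetric positive definite n×n matrices, t₁, t₂ ∈ ℝ, and for λ ∈ [0,1] set M_λ = (1-λ)M₁ + λM₂ and t_λ = (1-λ)t₁ + λt₂. Then t_λ² · Tr(M_λ^{-1}) ≤ (1-λ) t₁² Tr(M₁^{-1}) + λ t₂² Tr(M₂^{-1}). -/

import Mathlib

/-!
Completing the square gives, for symmetric positive definite `M`,
`t² Tr(M⁻¹) = max_Y (2 t Tr Y - Tr(Yᵀ M Y))`, the maximum being attained at `Y = t M⁻¹`.
For fixed `Y` the right-hand side is affine in `(t, M)`, so the left-hand side, a pointwise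
maximum of affine functions, is jointly convex.
-/

open Matrix

namespace Matrix

variable {n : Type*}

theorem PosDef.smul_add_smul {M₁ M₂ : Matrix n n ℝ} (h₁ : M₁.PosDef) (h₂ : M₂.PosDef)
    {a b : ℝ} (ha : 0 ≤ a) (hb : 0 ≤ b) (hab : 0 < a + b) : (a • M₁ + b • M₂).PosDef := by
  rcases ha.eq_or_lt with rfl | ha
  · rw [zero_smul, zero_add]
    exact h₂.smul (by simpa using hab)
  · exact (h₁.smul ha).add_posSemidef (h₂.posSemidef.smul hb)

variable [Fintype n] [DecidableEq n]

theorem IsSymm.sq_mul_trace_inv_eq {R : Type*} [CommRing R] {M : Matrix n n R} (hM : M.IsSymm)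
    (hu : IsUnit M) (t : R) (Y : Matrix n n R) :
    t ^ 2 * M⁻¹.trace = 2 * t * Y.trace - (Yᵀ * M * Y).trace
      + ((Y - t • M⁻¹)ᵀ * M * (Y - t • M⁻¹)).trace := by
  have hMinv : M * M⁻¹ = 1 := mul_nonsing_inv M ((isUnit_iff_isUnit_det M).mp hu)
  have hinvM : M⁻¹ * M = 1 := nonsing_inv_mul M ((isUnit_iff_isUnit_det M).mp hu)
  have hsymm : M⁻¹ᵀ = M⁻¹ := hM.inv
  simp only [transpose_sub, transpose_smul, hsymm, sub_mul, mul_sub, Matrix.smul_mul,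
    Matrix.mul_smul, Matrix.mul_assoc, hMinv, Matrix.mul_one, hinvM, Matrix.one_mul, trace_sub,
    trace_smul, trace_transpose, smul_eq_mul]
  ring

theorem PosDef.two_mul_trace_sub_le {M : Matrix n n ℝ} (hM : M.PosDef) (t : ℝ)
    (Y : Matrix n n ℝ) :
    2 * t * Y.trace - (Yᵀ * M * Y).trace ≤ t ^ 2 * M⁻¹.trace := by
  have hconj := hM.posSemidef.conjTranspose_mul_mul_same (Y - t • M⁻¹)
  rw [conjTranspose_eq_transpose_of_trivial] at hconj
  rw [(isHermitian_iff_isSymm.mp hM.isHermitian).sq_mul_trace_inv_eq hM.isUnit t Y]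
  exact le_add_of_nonneg_right hconj.trace_nonneg

theorem IsSymm.two_mul_trace_smul_inv_sub {R : Type*} [CommRing R] {M : Matrix n n R}
    (hM : M.IsSymm) (hu : IsUnit M) (t : R) :
    2 * t * (t • M⁻¹).trace - ((t • M⁻¹)ᵀ * M * (t • M⁻¹)).trace = t ^ 2 * M⁻¹.trace := by
  simp [hM.sq_mul_trace_inv_eq hu t (t • M⁻¹)]

theorem sq_mul_trace_inv_smul_add_smul_le {M₁ M₂ : Matrix n n ℝ} (h₁ : M₁.PosDef)
    (h₂ : M₂.PosDef) (t₁ t₂ : ℝ) {a b : ℝ} (ha : 0 ≤ a) (hb : 0 ≤ b)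
    (hA : (a • M₁ + b • M₂).PosDef) :
    (a * t₁ + b * t₂) ^ 2 * (a • M₁ + b • M₂)⁻¹.trace
      ≤ a * (t₁ ^ 2 * M₁⁻¹.trace) + b * (t₂ ^ 2 * M₂⁻¹.trace) := by
  set A := a • M₁ + b • M₂
  set t := a * t₁ + b * t₂
  set Y := t • A⁻¹
  calc t ^ 2 * A⁻¹.trace = 2 * t * Y.trace - (Yᵀ * A * Y).trace :=
        ((isHermitian_iff_isSymm.mp hA.isHermitian).two_mul_trace_smul_inv_sub hA.isUnit t).symm
    _ = a * (2 * t₁ * Y.trace - (Yᵀ * M₁ * Y).trace)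
          + b * (2 * t₂ * Y.trace - (Yᵀ * M₂ * Y).trace) := by
        simp only [A, t, Matrix.mul_add, Matrix.add_mul, Matrix.mul_smul, Matrix.smul_mul,
          trace_add, trace_smul, smul_eq_mul]
        ring
    _ ≤ _ := by
        gcongr
        · exact h₁.two_mul_trace_sub_le t₁ Y
        · exact h₂.two_mul_trace_sub_le t₂ Y

end Matrix

/-- For symmetric positive definite matrices `M₁, M₂`,
reals `t₁, t₂`, and `λ ∈ [0,1]`, with `M_λ = (1-λ)M₁ + λM₂` and
`t_λ = (1-λ)t₁ + λt₂`, one has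
`t_λ² Tr(M_λ⁻¹) ≤ (1-λ) t₁² Tr(M₁⁻¹) + λ t₂² Tr(M₂⁻¹)`. -/
theorem sq_mul_trace_inv_convex (n : ℕ)
    (M₁ M₂ : Matrix (Fin n) (Fin n) ℝ)
    (h₁ : M₁.PosDef) (h₂ : M₂.PosDef)
    (t₁ t₂ : ℝ) (l : ℝ) (hl0 : 0 ≤ l) (hl1 : l ≤ 1) :
    ((1 - l) * t₁ + l * t₂) ^ 2 * (((1 - l) • M₁ + l • M₂)⁻¹).trace
      ≤ (1 - l) * (t₁ ^ 2 * (M₁⁻¹).trace) + l * (t₂ ^ 2 * (M₂⁻¹).trace) := by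
  have hl : 0 ≤ 1 - l := sub_nonneg.mpr hl1
  exact sq_mul_trace_inv_smul_add_smul_le h₁ h₂ t₁ t₂ hl hl0
    (h₁.smul_add_smul h₂ hl hl0 (by norm_num))
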